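/- arXiv:1604.02949 — 2 statements merged into one kernel-verified Lean document; each statement's English description precedes it below -/
import Mathlib

section
/- In a semisimple abelian code algebra, the minimum of the apparent distance over all codewords equals the minimum over the nonzero idempotents of the code: Δ_{B,ᾱ}(C) = min{ Δ_B(M(φ_{ᾱ,e})) : e² = e ∈ C, e ≠ 0 }. -/
attribute [local instance] Classical.propDecidable

/-- A family of ds-bounds (one relation for each length `m`). -/
abbrev DsFamily := ∀ m : ℕ, Set (ZMod m) → ℕ → Prop

/-- The ideal of relations `(X_i^{r_i} - 1)_i` in `F[X₁,…,X_s]`; the abelian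
code algebra `F(r₁,…,r_s)` is the quotient by this ideal. -/
noncomputable def mvSpan (s : ℕ) (r : Fin s → ℕ) (F : Type*) [Field F] :
    Ideal (MvPolynomial (Fin s) F) :=
  Ideal.span {g | ∃ i : Fin s, g = MvPolynomial.X i ^ r i - 1}

/-- The point `ᾱ^i = (α₁^{i₁}, …, α_s^{i_s})`. -/
def evalPt {s : ℕ} {r : Fin s → ℕ} {L : Type*} [Field L]
    (α : Fin s → L) (i : ∀ k, ZMod (r k)) : Fin s → L :=
  fun k => α k ^ (i k).val

/-- The hypermatrix of coefficients of the multivariate discrete Fourier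
transform `φ_{ᾱ,c} = Σ_{i∈I} c(ᾱ^i) X^i` of `c`. -/
noncomputable def dftMatrix {s : ℕ} {r : Fin s → ℕ} {F L : Type*} [Field F]
    [Field L] [Algebra F L] (α : Fin s → L) (c : MvPolynomial (Fin s) F) :
    (∀ k, ZMod (r k)) → L :=
  fun i => MvPolynomial.aeval (evalPt α i) c

/-- The defining set `D_ᾱ(S) = {i ∈ I : g(ᾱ^i) = 0 for all g ∈ S}`. -/
def definingSetMv {s : ℕ} (r : Fin s → ℕ) {F L : Type*} [Field F] [Field L]
    [Algebra F L] (α : Fin s → L) (S : Set (MvPolynomial (Fin s) F)) :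
    Set (∀ k, ZMod (r k)) :=
  {i | ∀ g ∈ S, MvPolynomial.aeval (evalPt α i) g = 0}

/-- The optimal ds-bound `δ̄(N) = max{b : (N,b) ∈ δ}` (as a supremum in `ℕ∞`). -/
noncomputable def dsOpt {n : ℕ} (δ : Set (ZMod n) → ℕ → Prop) (N : Set (ZMod n)) : ℕ∞ :=
  ⨆ a ∈ {a : ℕ | δ N a}, (a : ℕ∞)

/-- The `B`-apparent distance of an `s`-dimensional hypermatrix, defined
recursively: `Δ_B(0) = 0`; a nonzero `0`-dimensional hypermatrix (a scalar) has
apparent distance `1`; and for `s ≥ 1`,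
`Δ_B(M) = max_j ω_j(M)·ε_j(M)` where `ω_j(M) = max_{δ∈B} δ̄(Z_{r_j} \ supp_j M)`
and `ε_j(M)` is the maximum of the apparent distances of the nonzero
hypercolumns in direction `j`.  (For `s = 1` this reduces to
`Δ_B(v) = max_{δ∈B} δ̄(Z_n \ supp v)` on nonzero vectors.) -/
noncomputable def hypDist {L : Type*} [Field L] (B : Set DsFamily) :
    (s : ℕ) → (r : Fin s → ℕ) → ((∀ i, ZMod (r i)) → L) → ℕ∞
  | 0, _, M => if M = 0 then 0 else 1
  | s + 1, r, M =>
    if M = 0 then 0 else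
      ⨆ j : Fin (s + 1),
        (⨆ δ ∈ B, dsOpt (δ (r j))
            {k : ZMod (r j) | (fun x => M (j.insertNth k x)) = 0}) *
        ⨆ k ∈ {k : ZMod (r j) | (fun x => M (j.insertNth k x)) ≠ 0},
          hypDist B s (fun i => r (j.succAbove i)) (fun x => M (j.insertNth k x))

/-- The minimum Hamming distance of an abelian code `C` (an ideal of
`F[X₁,…,X_s]` containing the relations), codewords being represented by
polynomials with `i`-th partial degrees `< r i`. -/
noncomputable def minDistMv {s : ℕ} (r : Fin s → ℕ) {F : Type*} [Field F]
    (C : Ideal (MvPolynomial (Fin s) F)) : ℕ :=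
  sInf {w | ∃ c ∈ C, c ≠ 0 ∧ (∀ i, MvPolynomial.degreeOf i c < r i) ∧
    w = c.support.card}

/-- The apparent distance of an abelian code `C` with respect to `ᾱ` and `B`:
the minimum over nonzero codewords `c` of `Δ_B(M(φ_{ᾱ,c}))`. -/
noncomputable def appDistCodeAt {s : ℕ} (r : Fin s → ℕ) {F L : Type*} [Field F]
    [Field L] [Algebra F L] (B : Set DsFamily) (α : Fin s → L)
    (C : Ideal (MvPolynomial (Fin s) F)) : ℕ∞ :=
  ⨅ c ∈ {c | c ∈ C ∧ c ∉ mvSpan s r F}, hypDist B s r (dftMatrix (r := r) α c)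

/-- The apparent distance of an abelian code `C` with respect to `B`:
the maximum over all tuples `ᾱ ∈ U` of primitive roots of unity of the
`(B,ᾱ)`-apparent distances. -/
noncomputable def appDistCode {s : ℕ} (r : Fin s → ℕ) (F : Type*) (L : Type*)
    [Field F] [Field L] [Algebra F L] (B : Set DsFamily)
    (C : Ideal (MvPolynomial (Fin s) F)) : ℕ∞ :=
  ⨆ α ∈ {α : Fin s → L | ∀ i, IsPrimitiveRoot (α i) (r i)},
    appDistCodeAt r B α C

/-
The multivariate DFT is an injective `F`-algebra map from `F(r₁,…,r_s)` to `L`-valued functions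
on the index set: division by the relations `X_i^{r_i} - 1` leaves a remainder of partial
degrees `< r_i`, which vanishes on the grid of `r_i`-th roots of unity and is therefore zero by
the Combinatorial Nullstellensatz. All DFT values lie in the finite field `F(ᾱ)`; if `q` is its
order, then for a nonzero codeword `c` the DFT of `e = c^(q-1)` is the indicator function of
the support of the DFT of `c`. So `e` is a nonzero idempotent of `C` whose DFT has the same
support as that of `c`, and `Δ_B` only sees supports.
-/

section AbelianCode

open MvPolynomial

section degLex

variable {R : Type*} [CommRing R] [Nontrivial R] {σ : Type*} [LinearOrder σ] [WellFoundedGT σ]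

lemma degLex_degree_X_pow (n : ℕ) (i : σ) :
    MonomialOrder.degLex.degree (X i ^ n : MvPolynomial σ R) = Finsupp.single i n := by
  rw [MonomialOrder.degree_pow_of_pow_leadingCoeff_ne_zero] <;> simp [MonomialOrder.degree_X]

lemma degLex_degree_X_pow_sub_one {n : ℕ} (hn : n ≠ 0) (i : σ) :
    MonomialOrder.degLex.degree (X i ^ n - 1 : MvPolynomial σ R) = Finsupp.single i n := by
  rw [MonomialOrder.degree_sub_of_lt] <;>
    simp [degLex_degree_X_pow, MonomialOrder.toSyn_lt_iff_ne_zero, hn]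

lemma degLex_monic_X_pow_sub_one {n : ℕ} (hn : n ≠ 0) (i : σ) :
    MonomialOrder.degLex.Monic (X i ^ n - 1 : MvPolynomial σ R) := by
  rw [sub_eq_add_neg]
  refine MonomialOrder.monic_X.pow.add_of_lt ?_
  simp [degLex_degree_X_pow, MonomialOrder.toSyn_lt_iff_ne_zero, hn]

end degLex

variable {F : Type*} [Field F] {s : ℕ} {r : Fin s → ℕ}

lemma exists_degreeOf_lt_sub_mem_mvSpan (hr : ∀ i, 0 < r i) (c : MvPolynomial (Fin s) F) :
    ∃ d, (∀ i, degreeOf i d < r i) ∧ c - d ∈ mvSpan s r F := by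
  obtain ⟨g, d, hcd, -, hd⟩ := MonomialOrder.degLex.div
    (fun i => (degLex_monic_X_pow_sub_one (R := F) (hr i).ne' i).leadingCoeff_eq_one ▸ isUnit_one) c
  refine ⟨d, fun i => ?_, ?_⟩
  · rw [degreeOf_lt_iff (hr i)]
    intro m hm
    simpa [degLex_degree_X_pow_sub_one (hr i).ne', Finsupp.single_le_iff] using hd m hm i
  · rw [hcd, add_sub_cancel_right]
    refine Ideal.span_mono (s := Set.range _) (fun _ ⟨i, hi⟩ => ⟨i, hi.symm⟩) ?_
    rw [Ideal.span, ← Finsupp.range_linearCombination]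
    exact LinearMap.mem_range_self _ g

section DFT

variable {L : Type*} [Field L] [Algebra F L] {α : Fin s → L}

variable (r) in
noncomputable def dftAlgHom (α : Fin s → L) :
    MvPolynomial (Fin s) F →ₐ[F] ((∀ k, ZMod (r k)) → L) :=
  AlgHom.pi fun i => aeval (evalPt α i)

lemma dftAlgHom_apply (c : MvPolynomial (Fin s) F) : dftAlgHom r α c = dftMatrix α c := rfl

lemma mvSpan_le_ker_dftAlgHom (hα : ∀ i, α i ^ r i = 1) :
    mvSpan s r F ≤ RingHom.ker (dftAlgHom r α) := by
  rw [mvSpan, Ideal.span_le]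
  rintro _ ⟨k, rfl⟩
  ext i
  simp only [dftAlgHom, AlgHom.pi_apply, map_sub, map_pow, aeval_X, map_one, evalPt]
  rw [← pow_mul, mul_comm, pow_mul, hα k, one_pow, sub_self, Pi.zero_apply]

lemma eq_zero_of_degreeOf_lt_of_dftMatrix_eq_zero (hr : ∀ i, 0 < r i)
    (hα : ∀ i, IsPrimitiveRoot (α i) (r i)) {d : MvPolynomial (Fin s) F}
    (hd : ∀ i, degreeOf i d < r i) (h : ∀ i, dftMatrix (r := r) α d i = 0) : d = 0 := by
  apply map_injective (algebraMap F L) (algebraMap F L).injective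
  rw [map_zero]
  refine eq_zero_of_eval_zero_at_prod_finset _ (fun i => Polynomial.nthRootsFinset (r i) (1 : L))
    (fun i => ?_) (fun x hx => ?_)
  · rw [(hα i).card_nthRootsFinset, degreeOf, degrees_map_of_injective _ (algebraMap F L).injective,
      ← degreeOf]
    exact hd i
  · have : ∀ i, NeZero (r i) := fun i => ⟨(hr i).ne'⟩
    choose k hk hkx using fun i =>
      (hα i).eq_pow_of_pow_eq_one ((Polynomial.mem_nthRootsFinset (hr i) 1).1 (hx i))
    have hx : x = evalPt α (fun i => (k i : ZMod (r i))) := by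
      funext i
      simp [evalPt, ZMod.val_cast_of_lt (hk i), hkx]
    rw [eval_map, ← aeval_def, hx]
    exact h _

theorem ker_dftAlgHom (hr : ∀ i, 0 < r i) (hα : ∀ i, IsPrimitiveRoot (α i) (r i)) :
    RingHom.ker (dftAlgHom (F := F) r α) = mvSpan s r F := by
  refine le_antisymm (fun c hc => ?_) (mvSpan_le_ker_dftAlgHom fun i => (hα i).pow_eq_one)
  obtain ⟨d, hd, hcd⟩ := exists_degreeOf_lt_sub_mem_mvSpan hr c
  have hd0 : dftAlgHom r α d = 0 := by
    have := mvSpan_le_ker_dftAlgHom (fun i => (hα i).pow_eq_one) hcd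
    rwa [RingHom.mem_ker, map_sub, RingHom.mem_ker.1 hc, zero_sub, neg_eq_zero] at this
  rwa [eq_zero_of_degreeOf_lt_of_dftMatrix_eq_zero hr hα hd (congrFun hd0), sub_zero] at hcd

theorem mem_mvSpan_iff_dftMatrix_eq_zero (hr : ∀ i, 0 < r i)
    (hα : ∀ i, IsPrimitiveRoot (α i) (r i)) {c : MvPolynomial (Fin s) F} :
    c ∈ mvSpan s r F ↔ ∀ i, dftMatrix (r := r) α c i = 0 := by
  simp only [← ker_dftAlgHom hr hα, RingHom.mem_ker, funext_iff, Pi.zero_apply, dftAlgHom_apply]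

lemma dftMatrix_mem_adjoin_range (c : MvPolynomial (Fin s) F) (i : ∀ k, ZMod (r k)) :
    dftMatrix α c i ∈ IntermediateField.adjoin F (Set.range α) := by
  have hpt : Set.range (evalPt α i) ⊆ IntermediateField.adjoin F (Set.range α) := by
    rintro _ ⟨k, rfl⟩
    exact pow_mem (IntermediateField.subset_adjoin F _ (Set.mem_range_self k)) _
  exact Algebra.adjoin_le hpt (aeval_range (R := F) (evalPt α i) ▸ AlgHom.mem_range_self _ c)

lemma exists_pow_dftMatrix_eq_one [Finite F] (hα : ∀ i, IsIntegral F (α i)) :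
    ∃ N ≠ 0, ∀ (c : MvPolynomial (Fin s) F) (i : ∀ k, ZMod (r k)),
      dftMatrix α c i ≠ 0 → dftMatrix α c i ^ N = 1 := by
  set K := IntermediateField.adjoin F (Set.range α)
  have : FiniteDimensional F K :=
    IntermediateField.finiteDimensional_adjoin fun _ ⟨i, hi⟩ => hi ▸ hα i
  have : Fintype K := @Fintype.ofFinite K (Module.finite_of_finite F)
  refine ⟨Fintype.card K - 1, by have := Fintype.one_lt_card (α := K); omega, fun c i hv => ?_⟩
  have hK : (⟨_, dftMatrix_mem_adjoin_range c i⟩ : K) ≠ 0 := Subtype.coe_ne_coe.1 hv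
  exact congrArg Subtype.val (FiniteField.pow_card_sub_one_eq_one _ hK)

end DFT

lemma hypDist_congr_of_eq_zero_iff {L : Type*} [Field L] (B : Set DsFamily) {s : ℕ}
    {r : Fin s → ℕ} {M M' : (∀ i, ZMod (r i)) → L} (h : ∀ i, M i = 0 ↔ M' i = 0) :
    hypDist B s r M = hypDist B s r M' := by
  have eq_zero_iff {ι : Type} {f g : ι → L} (h : ∀ i, f i = 0 ↔ g i = 0) : f = 0 ↔ g = 0 := by
    simp only [funext_iff, Pi.zero_apply, h]
  induction s with
  | zero => simp only [hypDist, eq_zero_iff h]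
  | succ n ih =>
    have hslice (j : Fin (n + 1)) (k : ZMod (r j)) :
        (fun x => M (j.insertNth k x)) = 0 ↔ (fun x => M' (j.insertNth k x)) = 0 :=
      eq_zero_iff fun x => h _
    simp only [hypDist, eq_zero_iff h, ne_eq, hslice]
    congr! 7 with j k
    exact ih fun x => h _

end AbelianCode

theorem appDistCodeAt_eq_inf_idempotents_general
    {F L : Type*} [Field F] [Fintype F] [Field L] [Algebra F L]
    (s : ℕ) (r : Fin s → ℕ) (hr : ∀ i, 0 < r i)
    (α : Fin s → L) (hα : ∀ i, IsPrimitiveRoot (α i) (r i))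
    (B : Set DsFamily)
    (C : Ideal (MvPolynomial (Fin s) F)) :
    appDistCodeAt r B α C =
      ⨅ e ∈ {e | e ∈ C ∧ e ∉ mvSpan s r F ∧ e * e - e ∈ mvSpan s r F},
        hypDist B s r (dftMatrix (r := r) α e) := by
  rw [appDistCodeAt]
  refine le_antisymm (le_iInf₂ fun e he => iInf₂_le e ⟨he.1, he.2.1⟩)
    (le_iInf₂ fun c ⟨hcC, hcN⟩ => ?_)
  obtain ⟨N, hN, hpow⟩ :=
    exists_pow_dftMatrix_eq_one (F := F) (r := r) fun i => ((hα i).isIntegral (hr i)).tower_top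
  have hdft_pow (i : ∀ k, ZMod (r k)) : dftMatrix α (c ^ N) i = dftMatrix α c i ^ N := by
    rw [← dftAlgHom_apply, map_pow, Pi.pow_apply, dftAlgHom_apply]
  have hsupp (i : ∀ k, ZMod (r k)) : dftMatrix α (c ^ N) i = 0 ↔ dftMatrix α c i = 0 := by
    rw [hdft_pow, pow_eq_zero_iff hN]
  have hidem : c ^ N * c ^ N - c ^ N ∈ mvSpan s r F := by
    refine (mem_mvSpan_iff_dftMatrix_eq_zero hr hα).2 fun i => ?_
    rw [← dftAlgHom_apply, map_sub, map_mul]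
    simp only [Pi.sub_apply, Pi.mul_apply, dftAlgHom_apply, hdft_pow]
    by_cases hv : dftMatrix α c i = 0
    · simp [hv, hN]
    · simp [hpow c i hv]
  have hne : c ^ N ∉ mvSpan s r F := by
    rw [mem_mvSpan_iff_dftMatrix_eq_zero hr hα] at hcN ⊢
    exact fun h => hcN fun i => (hsupp i).1 (h i)
  calc _ ≤ hypDist B s r (dftMatrix (r := r) α (c ^ N)) :=
        iInf₂_le _ ⟨C.pow_mem_of_mem hcC N (Nat.pos_of_ne_zero hN), hne, hidem⟩
    _ = _ := hypDist_congr_of_eq_zero_iff B hsupp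

/-- in the semisimple abelian code algebra, the minimum of the
apparent distance over the nonzero codewords of `C` equals the minimum over the
nonzero idempotents of `C` (elements `e ∈ C` with `e² = e` modulo the relations). -/
theorem appDistCodeAt_eq_inf_idempotents
    {F L : Type*} [Field F] [Fintype F] [Field L] [Algebra F L]
    (s : ℕ) (r : Fin s → ℕ) (hr : ∀ i, 0 < r i) (hss : ∀ i, ((r i : ℕ) : F) ≠ 0)
    (α : Fin s → L) (hα : ∀ i, IsPrimitiveRoot (α i) (r i))
    (B : Set DsFamily)
    (C : Ideal (MvPolynomial (Fin s) F)) (hC : mvSpan s r F ≤ C) :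
    appDistCodeAt r B α C =
      ⨅ e ∈ {e | e ∈ C ∧ e ∉ mvSpan s r F ∧ e * e - e ∈ mvSpan s r F},
        hypDist B s r (dftMatrix (r := r) α e) :=
  appDistCodeAt_eq_inf_idempotents_general s r hr α hα B C
end

section
/- For an abelian code C with generating idempotent e and M the hypermatrix afforded by D_ᾱ(C): the map P ↦ (unique idempotent e' with M(φ_{ᾱ,e'}) = P) is a bijection between nonzero q-orbit hypermatrices P ≤ M (i.e., supp(P) ⊆ supp(M)) and nonzero idempotents of C; consequently Δ_{B,ᾱ}(C) = min{Δ_B(P) : 0 ≠ P ≤ M}, i.e., the ᾱ-apparent distance of C equals the minimum B-apparent distance of the hypermatrix M(φ_{ᾱ,e}). -/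
attribute [local instance] Classical.propDecidable

/-- The `0/1` hypermatrix afforded by a set `D ⊆ I`: entry `0` at the indices in
`D` and `1` elsewhere. -/
noncomputable def afforded (L : Type*) [Field L] {s : ℕ} {r : Fin s → ℕ}
    (D : Set (∀ k, ZMod (r k))) : (∀ k, ZMod (r k)) → L :=
  fun i => if i ∈ D then 0 else 1

/-- `D` is a union of `q`-orbits iff it is closed under componentwise
multiplication by `q`. -/
def qClosed (q : ℕ) {s : ℕ} {r : Fin s → ℕ} (D : Set (∀ k, ZMod (r k))) : Prop :=
  ∀ i ∈ D, (fun k => (q : ZMod (r k)) * i k) ∈ D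

/-!
Since every `r k` is invertible in `F`, Fourier inversion (orthogonality of the characters
`i ↦ ᾱ^{i·j}`) shows that `c ↦ φ_{ᾱ,c}` is injective modulo the relations, and, since the
Frobenius `x ↦ x^q` fixes exactly `F` inside `L`, that its image consists of the arrays `v` with
`v(q·i) = v(i)^q`. Idempotents thus correspond to `0/1` arrays, i.e. to hypermatrices afforded by
`q`-closed sets `D`; and `e'` lies in `C = ⟨e⟩` exactly when `φ_{ᾱ,e'}` vanishes on the zero
set of `φ_{ᾱ,e}`, which is `D_ᾱ(C)`. Since `Δ_B` only sees the zero pattern of a hypermatrix,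
the two infima run over the same values.
-/

open MvPolynomial Finset

section Relations

variable {K : Type*} [Field K] {s : ℕ} {r : Fin s → ℕ}

theorem X_pow_sub_one_mem_mvSpan (k : Fin s) :
    (X k ^ r k - 1 : MvPolynomial (Fin s) K) ∈ mvSpan s r K :=
  Ideal.subset_span ⟨k, rfl⟩

theorem aeval_eq_zero_of_mem_mvSpan {A : Type*} [CommRing A] [Algebra K A] {x : Fin s → A}
    (hx : ∀ k, x k ^ r k = 1) {c : MvPolynomial (Fin s) K} (hc : c ∈ mvSpan s r K) :
    aeval x c = 0 := by
  suffices mvSpan s r K ≤ RingHom.ker (aeval (R := K) x) from this hc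
  rw [mvSpan, Ideal.span_le]
  rintro g ⟨k, rfl⟩
  simp [hx k]

theorem prod_X_pow_sub_prod_X_pow_mod_mem_mvSpan (f : Fin s → ℕ) :
    (∏ k, X k ^ f k - ∏ k, X k ^ (f k % r k) : MvPolynomial (Fin s) K) ∈ mvSpan s r K := by
  rw [← Ideal.Quotient.eq]
  simp only [map_prod, map_pow]
  refine prod_congr rfl fun k _ => pow_eq_pow_mod _ ?_
  rw [← map_pow, ← map_one (Ideal.Quotient.mk _), Ideal.Quotient.eq]
  exact X_pow_sub_one_mem_mvSpan k

variable (r) in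
noncomputable def reducedPoly {R : Type*} [CommSemiring R] [∀ k, NeZero (r k)]
    (a : (∀ k, ZMod (r k)) → R) : MvPolynomial (Fin s) R :=
  ∑ j, C (a j) * ∏ k, X k ^ (j k).val

theorem reducedPoly_add {R : Type*} [CommSemiring R] [∀ k, NeZero (r k)]
    (a b : (∀ k, ZMod (r k)) → R) :
    reducedPoly r (a + b) = reducedPoly r a + reducedPoly r b := by
  simp only [reducedPoly, Pi.add_apply, map_add, add_mul, sum_add_distrib]

theorem reducedPoly_zero {R : Type*} [CommSemiring R] [∀ k, NeZero (r k)] :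
    reducedPoly r (0 : (∀ k, ZMod (r k)) → R) = 0 := by
  simp [reducedPoly]

theorem reducedPoly_single {R : Type*} [CommSemiring R] [∀ k, NeZero (r k)]
    (j : ∀ k, ZMod (r k)) (x : R) :
    reducedPoly r (Pi.single j x) = C x * ∏ k, X k ^ (j k).val := by
  rw [reducedPoly, Fintype.sum_eq_single j fun i hi => by simp [hi]]
  simp

theorem exists_sub_reducedPoly_mem_mvSpan [∀ k, NeZero (r k)] (c : MvPolynomial (Fin s) K) :
    ∃ a, c - reducedPoly r a ∈ mvSpan s r K := by
  induction c using MvPolynomial.induction_on' with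
  | monomial m x =>
    refine ⟨Pi.single (fun k => (m k : ZMod (r k))) x, ?_⟩
    rw [reducedPoly_single, monomial_eq, Finsupp.prod_fintype _ _ fun _ => pow_zero _, ← mul_sub]
    simp only [ZMod.val_natCast]
    exact Ideal.mul_mem_left _ _ (prod_X_pow_sub_prod_X_pow_mod_mem_mvSpan m)
  | add c d hc hd =>
    obtain ⟨a, ha⟩ := hc
    obtain ⟨b, hb⟩ := hd
    refine ⟨a + b, ?_⟩
    rw [reducedPoly_add, add_sub_add_comm]
    exact add_mem ha hb

end Relations

section Fourier

variable {L : Type*} [Field L] {s : ℕ} {r : Fin s → ℕ}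

theorem evalPt_pow_eq_one {α : Fin s → L} (hα : ∀ k, α k ^ r k = 1) (i : ∀ k, ZMod (r k))
    (k : Fin s) : evalPt α i k ^ r k = 1 := by
  rw [evalPt, ← pow_mul, mul_comm, pow_mul, hα k, one_pow]

theorem evalPt_natCast_mul {α : Fin s → L} (hα : ∀ k, α k ^ r k = 1) (n : ℕ)
    (i : ∀ k, ZMod (r k)) :
    evalPt α (fun k => (n : ZMod (r k)) * i k) = fun k => evalPt α i k ^ n := by
  funext k
  rw [evalPt, evalPt, ← pow_mul, ZMod.val_mul, ZMod.val_natCast, Nat.mod_mul_mod,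
    ← pow_eq_pow_mod _ (hα k), mul_comm]

theorem sum_pow_val_eq_ite {n : ℕ} [NeZero n] {x : L} (hx : x ^ n = 1) :
    ∑ t : ZMod n, x ^ t.val = if x = 1 then (n : L) else 0 := by
  obtain ⟨m, rfl⟩ : ∃ m, n = m + 1 := Nat.exists_eq_succ_of_ne_zero (NeZero.ne n)
  rw [show ∑ t : ZMod (m + 1), x ^ t.val = ∑ t ∈ range (m + 1), x ^ t from
    Fin.sum_univ_eq_sum_range (x ^ ·) _]
  split_ifs with h
  · simp [h]
  · rw [geom_sum_eq h, hx, sub_self, zero_div]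

variable (r) in
def dftMat [∀ k, NeZero (r k)] (α : Fin s → L) :
    Matrix (∀ k, ZMod (r k)) (∀ k, ZMod (r k)) L :=
  Matrix.of fun i j => ∏ k, evalPt α i k ^ (j k).val

theorem dftMat_symm [∀ k, NeZero (r k)] (α : Fin s → L) (i j : ∀ k, ZMod (r k)) :
    dftMat r α i j = dftMat r α j i := by
  simp only [dftMat, Matrix.of_apply, evalPt, pow_right_comm]

theorem dftMat_apply_natCast_mul [∀ k, NeZero (r k)] {β : Fin s → L}
    (hβ : ∀ k, β k ^ r k = 1) (n : ℕ) (j i : ∀ k, ZMod (r k)) :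
    dftMat r β j (fun k => (n : ZMod (r k)) * i k) = dftMat r β j i ^ n := by
  rw [dftMat_symm, dftMat_symm β j i]
  simp only [dftMat, Matrix.of_apply, evalPt_natCast_mul hβ, ← prod_pow, pow_right_comm]

theorem dftMat_mul_dftMat_inv [∀ k, NeZero (r k)] {α : Fin s → L}
    (hα : ∀ k, IsPrimitiveRoot (α k) (r k)) :
    dftMat r α * dftMat r α⁻¹ = ((∏ k, r k : ℕ) : L) • 1 := by
  ext u w
  have hcoord : ∀ k, α k ^ (u k).val * (α k)⁻¹ ^ (w k).val = 1 ↔ u k = w k := fun k => by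
    rw [inv_pow, mul_inv_eq_one₀ (pow_ne_zero _ ((hα k).ne_zero (NeZero.ne _)))]
    exact ⟨fun h => ZMod.val_injective _ ((hα k).pow_inj (ZMod.val_lt _) (ZMod.val_lt _) h),
      fun h => h ▸ rfl⟩
  have hroot : ∀ k, (α k ^ (u k).val * (α k)⁻¹ ^ (w k).val) ^ r k = 1 := fun k => by
    rw [mul_pow, pow_right_comm, (hα k).pow_eq_one, pow_right_comm, inv_pow,
      (hα k).pow_eq_one, one_pow, inv_one, one_pow, one_mul]
  calc (dftMat r α * dftMat r α⁻¹) u w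
      = ∑ j : ∀ k, ZMod (r k),
          ∏ k, (α k ^ (u k).val * (α k)⁻¹ ^ (w k).val) ^ (j k).val := by
        simp only [Matrix.mul_apply, dftMat, Matrix.of_apply, evalPt, Pi.inv_apply,
          ← prod_mul_distrib]
        exact sum_congr rfl fun j _ => prod_congr rfl fun k _ => by
          rw [mul_pow, pow_right_comm ((α k)⁻¹)]
    _ = ∏ k, ∑ t : ZMod (r k), (α k ^ (u k).val * (α k)⁻¹ ^ (w k).val) ^ t.val := by
        rw [prod_univ_sum, Fintype.piFinset_univ]
    _ = (((∏ k, r k : ℕ) : L) • 1 : Matrix _ _ L) u w := by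
        simp only [sum_pow_val_eq_ite (hroot _), hcoord, Fintype.prod_ite_zero,
          ← _root_.funext_iff, Matrix.smul_apply, Matrix.one_apply, Nat.cast_prod, smul_eq_mul,
          mul_ite, mul_one, mul_zero]

end Fourier

section Transform

open scoped Matrix

variable {F L : Type*} [Field F] [Field L] [Algebra F L] {s : ℕ} {r : Fin s → ℕ}
  {α : Fin s → L}

theorem natCast_prod_ne_zero (hr : ∀ k, (r k : F) ≠ 0) : ((∏ k, r k : ℕ) : L) ≠ 0 := by
  rw [← map_natCast (algebraMap F L), map_ne_zero, Nat.cast_prod]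
  exact prod_ne_zero_iff.mpr fun k _ => hr k

theorem dftMatrix_sub (c d : MvPolynomial (Fin s) F) :
    dftMatrix (r := r) α (c - d) = dftMatrix α c - dftMatrix α d := by
  funext i; simp [dftMatrix]

theorem dftMatrix_mul (c d : MvPolynomial (Fin s) F) :
    dftMatrix (r := r) α (c * d) = dftMatrix α c * dftMatrix α d := by
  funext i; simp [dftMatrix]

theorem dftMatrix_eq_zero_of_mem_mvSpan (hα : ∀ k, α k ^ r k = 1) {c : MvPolynomial (Fin s) F}
    (hc : c ∈ mvSpan s r F) : dftMatrix (r := r) α c = 0 := by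
  funext i
  exact aeval_eq_zero_of_mem_mvSpan (evalPt_pow_eq_one hα i) hc

theorem dftMatrix_reducedPoly [∀ k, NeZero (r k)] (a : (∀ k, ZMod (r k)) → F) :
    dftMatrix (r := r) α (reducedPoly r a) = dftMat r α *ᵥ (algebraMap F L ∘ a) := by
  funext i
  simp [dftMatrix, reducedPoly, Matrix.mulVec, dotProduct, dftMat, mul_comm]

theorem dftMat_inv_mul_dftMat [∀ k, NeZero (r k)] (hα : ∀ k, IsPrimitiveRoot (α k) (r k)) :
    dftMat r α⁻¹ * dftMat r α = ((∏ k, r k : ℕ) : L) • 1 := by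
  simpa using dftMat_mul_dftMat_inv (α := α⁻¹) fun k => (hα k).inv

theorem dftMat_mulVec_injective [∀ k, NeZero (r k)] (hα : ∀ k, IsPrimitiveRoot (α k) (r k))
    (hN : ((∏ k, r k : ℕ) : L) ≠ 0) : Function.Injective (dftMat r α *ᵥ ·) := by
  intro a b hab
  have := congrArg (dftMat r α⁻¹ *ᵥ ·) hab
  exact smul_right_injective _ hN
    (by simpa [Matrix.mulVec_mulVec, dftMat_inv_mul_dftMat hα, Matrix.smul_mulVec] using this)

theorem dftMatrix_eq_zero_iff [∀ k, NeZero (r k)] (hα : ∀ k, IsPrimitiveRoot (α k) (r k))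
    (hN : ((∏ k, r k : ℕ) : L) ≠ 0) {c : MvPolynomial (Fin s) F} :
    dftMatrix (r := r) α c = 0 ↔ c ∈ mvSpan s r F := by
  refine ⟨fun hc => ?_, dftMatrix_eq_zero_of_mem_mvSpan fun k => (hα k).pow_eq_one⟩
  obtain ⟨a, ha⟩ := exists_sub_reducedPoly_mem_mvSpan (r := r) c
  have hred := dftMatrix_eq_zero_of_mem_mvSpan (fun k => (hα k).pow_eq_one) ha
  rw [dftMatrix_sub, hc, zero_sub, neg_eq_zero, dftMatrix_reducedPoly] at hred
  have ha0 : a = 0 := (algebraMap F L).injective.comp_left <| dftMat_mulVec_injective hα hN <|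
      show dftMat r α *ᵥ (algebraMap F L ∘ a) = dftMat r α *ᵥ (algebraMap F L ∘ 0) by
        simp [hred]
  simpa [ha0, reducedPoly_zero] using ha

theorem setOf_dftMatrix_eq_zero_ne_univ [∀ k, NeZero (r k)]
    (hα : ∀ k, IsPrimitiveRoot (α k) (r k)) (hN : ((∏ k, r k : ℕ) : L) ≠ 0)
    {c : MvPolynomial (Fin s) F} (hc : c ∉ mvSpan s r F) :
    {i | dftMatrix (r := r) α c i = 0} ≠ Set.univ := fun h =>
  hc ((dftMatrix_eq_zero_iff hα hN).mp (funext fun i => (Set.eq_univ_iff_forall.mp h i).out))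

theorem dftMatrix_eq_iff [∀ k, NeZero (r k)] (hα : ∀ k, IsPrimitiveRoot (α k) (r k))
    (hN : ((∏ k, r k : ℕ) : L) ≠ 0) {c d : MvPolynomial (Fin s) F} :
    dftMatrix (r := r) α c = dftMatrix α d ↔ c - d ∈ mvSpan s r F := by
  rw [← dftMatrix_eq_zero_iff hα hN, dftMatrix_sub, sub_eq_zero]

theorem dftMatrix_eq_zero_or_eq_one (hα : ∀ k, α k ^ r k = 1) {c : MvPolynomial (Fin s) F}
    (hc : c * c - c ∈ mvSpan s r F) (i : ∀ k, ZMod (r k)) :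
    dftMatrix (r := r) α c i = 0 ∨ dftMatrix (r := r) α c i = 1 := by
  refine IsIdempotentElem.iff_eq_zero_or_one.mp ?_
  have := congrFun (dftMatrix_eq_zero_of_mem_mvSpan hα hc) i
  rwa [dftMatrix_sub, dftMatrix_mul, Pi.sub_apply, Pi.mul_apply, Pi.zero_apply, sub_eq_zero] at this

end Transform

section FiniteField

open scoped Matrix

variable {F L : Type*} [Field F] [Fintype F] [Field L] [Algebra F L] {s : ℕ} {r : Fin s → ℕ}
  {α : Fin s → L}

theorem coprime_card_of_natCast_ne_zero {n : ℕ} (hn : (n : F) ≠ 0) :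
    Nat.Coprime (Fintype.card F) n := by
  obtain ⟨m, hp, hcard⟩ := FiniteField.card F (ringChar F)
  rw [hcard]
  exact Nat.Coprime.pow_left _
    ((Nat.Prime.coprime_iff_not_dvd hp).mpr fun h => hn ((ringChar.spec F n).mpr h))

theorem natCast_card_mul_injective (hr : ∀ k, (r k : F) ≠ 0) :
    Function.Injective fun i : ∀ k, ZMod (r k) =>
      fun k => (Fintype.card F : ZMod (r k)) * i k := by
  intro i j h
  funext k
  exact ((ZMod.isUnit_iff_coprime _ _).mpr (coprime_card_of_natCast_ne_zero (hr k))).mul_left_cancel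
      (congrFun h k)

theorem qClosed.natCast_mul_mem_iff [∀ k, NeZero (r k)] {q : ℕ} {D : Set (∀ k, ZMod (r k))}
    (hD : qClosed q D)
    (hq : Function.Injective fun i : ∀ k, ZMod (r k) => fun k => (q : ZMod (r k)) * i k)
    (i : ∀ k, ZMod (r k)) : (fun k => (q : ZMod (r k)) * i k) ∈ D ↔ i ∈ D := by
  refine ⟨fun h => ?_, hD i⟩
  have hbij := ((Set.toFinite D).injOn_iff_bijOn_of_mapsTo hD).mp hq.injOn
  obtain ⟨j, hj, hji⟩ := hbij.surjOn h
  exact hq hji ▸ hj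

theorem dftMatrix_natCast_card_mul (hα : ∀ k, α k ^ r k = 1) (c : MvPolynomial (Fin s) F)
    (i : ∀ k, ZMod (r k)) :
    dftMatrix (r := r) α c (fun k => (Fintype.card F : ZMod (r k)) * i k)
      = dftMatrix (r := r) α c i ^ Fintype.card F := by
  rw [dftMatrix, dftMatrix, evalPt_natCast_mul hα, ← FiniteField.frobeniusAlgHom_apply F L,
    comp_aeval_apply]
  rfl

theorem exists_algebraMap_eq_of_pow_card_eq_self {x : L} (hx : x ^ Fintype.card F = x) :
    ∃ a : F, algebraMap F L a = x := by
  have hdeg := FiniteField.X_pow_card_sub_X_natDegree_eq F (Fintype.one_lt_card (α := F))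
  have hroots : Multiset.card (Polynomial.X ^ Fintype.card F - Polynomial.X : Polynomial F).roots
      = (Polynomial.X ^ Fintype.card F - Polynomial.X : Polynomial F).natDegree := by
    rw [FiniteField.roots_X_pow_card_sub_X, hdeg]; rfl
  have hx : x ∈ (Polynomial.map (algebraMap F L)
      (Polynomial.X ^ Fintype.card F - Polynomial.X)).roots := by
    rw [Polynomial.mem_roots (Polynomial.map_ne_zero
      (FiniteField.X_pow_card_sub_X_ne_zero F (Fintype.one_lt_card (α := F))))]
    simp [hx]
  rw [← Polynomial.roots_map_of_injective_of_card_eq_natDegree (algebraMap F L).injective hroots,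
    Multiset.mem_map] at hx
  obtain ⟨a, -, ha⟩ := hx
  exact ⟨a, ha⟩

theorem exists_dftMatrix_eq [∀ k, NeZero (r k)] (hα : ∀ k, IsPrimitiveRoot (α k) (r k))
    (hr : ∀ k, (r k : F) ≠ 0) (v : (∀ k, ZMod (r k)) → L)
    (hv : ∀ i, v (fun k => (Fintype.card F : ZMod (r k)) * i k) = v i ^ Fintype.card F) :
    ∃ c : MvPolynomial (Fin s) F, dftMatrix (r := r) α c = v := by
  have hN := natCast_prod_ne_zero (L := L) hr
  set a := ((∏ k, r k : ℕ) : L)⁻¹ • (dftMat r α⁻¹ *ᵥ v)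
  have hinv : ∀ k, (α⁻¹) k ^ r k = 1 := fun k => by simp [inv_pow, (hα k).pow_eq_one]
  -- Frobenius permutes the terms of the inverse transform `a` of `v`, so `a` is `F`-valued.
  have hfix : ∀ j, a j ^ Fintype.card F = a j := fun j => by
    rw [← FiniteField.frobeniusAlgHom_apply F L]
    simp only [a, Pi.smul_apply, smul_eq_mul, Matrix.mulVec, dotProduct, map_mul, map_inv₀,
      map_natCast, map_sum, FiniteField.frobeniusAlgHom_apply, ← dftMat_apply_natCast_mul hinv,
      ← hv]
    congr 1
    exact ((natCast_card_mul_injective hr).bijective_of_finite).sum_comp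
      fun i => dftMat r α⁻¹ j i * v i
  choose b hb using fun j => exists_algebraMap_eq_of_pow_card_eq_self (hfix j)
  refine ⟨reducedPoly r b, ?_⟩
  rw [dftMatrix_reducedPoly, show algebraMap F L ∘ b = a from funext hb, Matrix.mulVec_smul,
    Matrix.mulVec_mulVec, dftMat_mul_dftMat_inv hα, Matrix.smul_mulVec, Matrix.one_mulVec,
    smul_smul, inv_mul_cancel₀ hN, one_smul]

end FiniteField

section Afforded

variable {L : Type*} [Field L] {s : ℕ} {r : Fin s → ℕ}

theorem afforded_eq_zero_iff {D : Set (∀ k, ZMod (r k))} {i : ∀ k, ZMod (r k)} :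
    afforded L D i = 0 ↔ i ∈ D := by
  by_cases hi : i ∈ D <;> simp [afforded, hi]

theorem afforded_ne_zero_iff {D : Set (∀ k, ZMod (r k))} :
    afforded L D ≠ 0 ↔ D ≠ Set.univ := by
  simp only [ne_eq, _root_.funext_iff, Pi.zero_apply, afforded_eq_zero_iff, Set.eq_univ_iff_forall]

theorem setOf_afforded_ne_zero_subset_iff {D D' : Set (∀ k, ZMod (r k))} :
    {i | afforded L D i ≠ 0} ⊆ {i | afforded L D' i ≠ 0} ↔ D' ⊆ D := by
  simp only [Set.subset_def, Set.mem_ofPred_eq, ne_eq, afforded_eq_zero_iff]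
  exact forall_congr' fun _ => not_imp_not

theorem afforded_natCast_mul {q : ℕ} (hq : q ≠ 0) {D : Set (∀ k, ZMod (r k))}
    {i : ∀ k, ZMod (r k)} (hi : (fun k => (q : ZMod (r k)) * i k) ∈ D ↔ i ∈ D) :
    afforded L D (fun k => (q : ZMod (r k)) * i k) = afforded L D i ^ q := by
  by_cases h : i ∈ D <;> simp [afforded, hi, h, hq]

theorem afforded_setOf_eq_zero {v : (∀ k, ZMod (r k)) → L} (hv : ∀ i, v i = 0 ∨ v i = 1) :
    afforded L {i | v i = 0} = v := by
  funext i
  rcases hv i with h | h <;> simp [afforded, h]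

theorem hypDist_congr (B : Set DsFamily) :
    ∀ (s : ℕ) (r : Fin s → ℕ) (M M' : (∀ i, ZMod (r i)) → L),
      (∀ i, M i = 0 ↔ M' i = 0) → hypDist B s r M = hypDist B s r M'
  | 0, r, M, M', h => by simp only [hypDist, _root_.funext_iff, Pi.zero_apply, h]
  | s + 1, r, M, M', h => by
    simp only [hypDist, ne_eq, _root_.funext_iff, Pi.zero_apply, h,
      hypDist_congr B s _ (fun x => M (Fin.insertNth _ _ x)) (fun x => M' (Fin.insertNth _ _ x))
        fun x => h _]

theorem hypDist_afforded_setOf_eq_zero (B : Set DsFamily) (v : (∀ k, ZMod (r k)) → L) :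
    hypDist B s r (afforded L {i | v i = 0}) = hypDist B s r v :=
  hypDist_congr B s r _ _ fun _ => afforded_eq_zero_iff

end Afforded

section Code

variable {F L : Type*} [Field F] [Field L] [Algebra F L] {s : ℕ} {r : Fin s → ℕ}
  {α : Fin s → L} {e : MvPolynomial (Fin s) F}

theorem dftMatrix_apply_eq_zero_of_mem_sup_span (hα : ∀ k, α k ^ r k = 1)
    {g : MvPolynomial (Fin s) F} (hg : g ∈ mvSpan s r F ⊔ Ideal.span {e})
    {i : ∀ k, ZMod (r k)} (hi : dftMatrix α e i = 0) : dftMatrix α g i = 0 := by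
  obtain ⟨m, hm, y, hy, rfl⟩ := Submodule.mem_sup.mp hg
  obtain ⟨h, rfl⟩ := Ideal.mem_span_singleton'.mp hy
  have hm0 := congrFun (dftMatrix_eq_zero_of_mem_mvSpan hα hm) i
  simp only [dftMatrix, Pi.zero_apply] at hm0 hi ⊢
  simp [hm0, hi]

theorem definingSetMv_sup_span (hα : ∀ k, α k ^ r k = 1) (e : MvPolynomial (Fin s) F) :
    definingSetMv r α ((mvSpan s r F ⊔ Ideal.span {e} : Ideal _) : Set (MvPolynomial (Fin s) F))
      = {i | dftMatrix α e i = 0} :=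
  Set.ext fun _ => ⟨fun h => h e (Ideal.mem_sup_right (Ideal.mem_span_singleton_self e)),
    fun hi _ hg => dftMatrix_apply_eq_zero_of_mem_sup_span hα hg hi⟩

theorem mem_sup_span_of_dftMatrix [∀ k, NeZero (r k)] (hα : ∀ k, IsPrimitiveRoot (α k) (r k))
    (hN : ((∏ k, r k : ℕ) : L) ≠ 0) (he : e * e - e ∈ mvSpan s r F)
    {c : MvPolynomial (Fin s) F}
    (hc : ∀ i : ∀ k, ZMod (r k), dftMatrix α e i = 0 → dftMatrix α c i = 0) :
    c ∈ mvSpan s r F ⊔ Ideal.span {e} := by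
  have hrest : c - e * c ∈ mvSpan s r F := by
    rw [← dftMatrix_eq_zero_iff hα hN]
    funext i
    rw [dftMatrix_sub, dftMatrix_mul, Pi.sub_apply, Pi.mul_apply, Pi.zero_apply]
    rcases dftMatrix_eq_zero_or_eq_one (fun k => (hα k).pow_eq_one) he i with h | h
    · simp [h, hc i h]
    · simp [h]
  rw [← sub_add_cancel c (e * c)]
  exact Submodule.add_mem_sup hrest (Ideal.mul_mem_right c _ (Ideal.mem_span_singleton_self e))

variable [Fintype F]

theorem qClosed_setOf_dftMatrix_eq_zero (hα : ∀ k, α k ^ r k = 1) (c : MvPolynomial (Fin s) F) :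
    qClosed (Fintype.card F) {i | dftMatrix (r := r) α c i = 0} := fun i hi => by
  rw [Set.mem_ofPred_eq, dftMatrix_natCast_card_mul hα, hi.out, zero_pow Fintype.card_ne_zero]

theorem exists_idempotent_dftMatrix_eq_afforded [∀ k, NeZero (r k)]
    (hα : ∀ k, IsPrimitiveRoot (α k) (r k)) (hr : ∀ k, (r k : F) ≠ 0)
    (he : e * e - e ∈ mvSpan s r F) {D : Set (∀ k, ZMod (r k))}
    (hD : qClosed (Fintype.card F) D)
    (hDu : D ≠ Set.univ) (hD0 : {i | dftMatrix α e i = 0} ⊆ D) :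
    ∃ e', e' ∈ mvSpan s r F ⊔ Ideal.span {e} ∧ e' ∉ mvSpan s r F ∧
      e' * e' - e' ∈ mvSpan s r F ∧ dftMatrix α e' = afforded L D := by
  have hN := natCast_prod_ne_zero (L := L) hr
  obtain ⟨e', he'⟩ := exists_dftMatrix_eq hα hr (afforded L D) fun i =>
    afforded_natCast_mul Fintype.card_ne_zero
      (hD.natCast_mul_mem_iff (natCast_card_mul_injective hr) i)
  refine ⟨e', mem_sup_span_of_dftMatrix hα hN he fun i hi => ?_, ?_, ?_, he'⟩
  · rw [he']
    exact afforded_eq_zero_iff.mpr (hD0 hi)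
  · rw [← dftMatrix_eq_zero_iff hα hN, he']
    exact afforded_ne_zero_iff.mpr hDu
  · rw [← dftMatrix_eq_zero_iff hα hN, dftMatrix_sub, dftMatrix_mul, he']
    funext i
    by_cases hi : i ∈ D <;> simp [afforded, hi]

end Code

theorem appDistCodeAt_eq_min_over_qOrbit_hypermatrices_general
    {F L : Type*} [Field F] [Fintype F] [Field L] [Algebra F L]
    (q : ℕ) (hq : Fintype.card F = q)
    (s : ℕ) (r : Fin s → ℕ) (hss : ∀ i, ((r i : ℕ) : F) ≠ 0)
    (α : Fin s → L) (hα : ∀ i, IsPrimitiveRoot (α i) (r i))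
    (B : Set DsFamily)
    (C : Ideal (MvPolynomial (Fin s) F)) (e : MvPolynomial (Fin s) F)
    (heid : e * e - e ∈ mvSpan s r F)
    (hgen : C = mvSpan s r F ⊔ Ideal.span {e})
    (M : (∀ k, ZMod (r k)) → L)
    (hM : M = afforded L (definingSetMv r α (C : Set (MvPolynomial (Fin s) F)))) :
    (∀ D : Set (∀ k, ZMod (r k)), qClosed q D → D ≠ Set.univ →
        {i | afforded L D i ≠ 0} ⊆ {i | M i ≠ 0} →
        ∃ e' : MvPolynomial (Fin s) F,
          (e' ∈ C ∧ e' ∉ mvSpan s r F ∧ e' * e' - e' ∈ mvSpan s r F ∧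
            dftMatrix (r := r) α e' = afforded L D) ∧
          ∀ e'' : MvPolynomial (Fin s) F,
            (e'' ∈ C ∧ e'' ∉ mvSpan s r F ∧ e'' * e'' - e'' ∈ mvSpan s r F ∧
              dftMatrix (r := r) α e'' = afforded L D) →
            e'' - e' ∈ mvSpan s r F) ∧
    (∀ e' : MvPolynomial (Fin s) F,
        e' ∈ C → e' ∉ mvSpan s r F → e' * e' - e' ∈ mvSpan s r F →
        ∃ D : Set (∀ k, ZMod (r k)), qClosed q D ∧ D ≠ Set.univ ∧
          {i | afforded L D i ≠ 0} ⊆ {i | M i ≠ 0} ∧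
          dftMatrix (r := r) α e' = afforded L D) ∧
    appDistCodeAt r B α C =
      ⨅ P ∈ {P : (∀ k, ZMod (r k)) → L |
          (∃ D, qClosed q D ∧ P = afforded L D) ∧ P ≠ 0 ∧
          {i | P i ≠ 0} ⊆ {i | M i ≠ 0}},
        hypDist B s r P := by
  subst hq hgen hM
  have : ∀ k, NeZero (r k) := fun k => ⟨fun h => hss k (by rw [h, Nat.cast_zero])⟩
  have hroot : ∀ k, α k ^ r k = 1 := fun k => (hα k).pow_eq_one
  have hN := natCast_prod_ne_zero (L := L) hss
  simp only [definingSetMv_sup_span hroot, setOf_afforded_ne_zero_subset_iff]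
  refine ⟨fun D hD hDu hD0 => ?_, fun e' he' hns hid => ?_,
    le_antisymm (le_iInf₂ ?_) (le_iInf₂ ?_)⟩
  · obtain ⟨e', he'⟩ := exists_idempotent_dftMatrix_eq_afforded hα hss heid hD hDu hD0
    exact ⟨e', he', fun e'' he'' =>
      (dftMatrix_eq_iff hα hN).mp (he''.2.2.2.trans he'.2.2.2.symm)⟩
  · exact ⟨_, qClosed_setOf_dftMatrix_eq_zero hroot e',
      setOf_dftMatrix_eq_zero_ne_univ hα hN hns,
      fun _ hi => dftMatrix_apply_eq_zero_of_mem_sup_span hroot he' hi,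
      (afforded_setOf_eq_zero (dftMatrix_eq_zero_or_eq_one hroot hid)).symm⟩
  · rintro _ ⟨⟨D, hD, rfl⟩, hP0, hsub⟩
    obtain ⟨e', he'C, he'ns, -, hdft⟩ := exists_idempotent_dftMatrix_eq_afforded hα hss heid hD
      (afforded_ne_zero_iff.mp hP0) (setOf_afforded_ne_zero_subset_iff.mp hsub)
    exact (iInf₂_le e' ⟨he'C, he'ns⟩).trans_eq (congrArg _ hdft)
  · rintro c ⟨hc, hns⟩
    exact (iInf₂_le _ ⟨⟨_, qClosed_setOf_dftMatrix_eq_zero hroot c, rfl⟩,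
      afforded_ne_zero_iff.mpr (setOf_dftMatrix_eq_zero_ne_univ hα hN hns),
      setOf_afforded_ne_zero_subset_iff.mpr fun _ hi =>
        dftMatrix_apply_eq_zero_of_mem_sup_span hroot hc hi⟩).trans_eq
      (hypDist_afforded_setOf_eq_zero B _)

/-- for an abelian code `C` with generating idempotent `e` and
`M` the hypermatrix afforded by `D_ᾱ(C)`: nonzero `q`-orbit hypermatrices
`P ≤ M` correspond bijectively to the nonzero idempotents of `C` (via
`P = M(φ_{ᾱ,e'})`, uniquely modulo the relations); consequently the
`(B,ᾱ)`-apparent distance of `C` equals `min{Δ_B(P) : 0 ≠ P ≤ M}`. -/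
theorem appDistCodeAt_eq_min_over_qOrbit_hypermatrices
    {F L : Type*} [Field F] [Fintype F] [Field L] [Algebra F L]
    (q : ℕ) (hq : Fintype.card F = q)
    (s : ℕ) (r : Fin s → ℕ) (hr : ∀ i, 0 < r i) (hss : ∀ i, ((r i : ℕ) : F) ≠ 0)
    (α : Fin s → L) (hα : ∀ i, IsPrimitiveRoot (α i) (r i))
    (B : Set DsFamily)
    (C : Ideal (MvPolynomial (Fin s) F)) (e : MvPolynomial (Fin s) F)
    (he : e ∈ C) (heid : e * e - e ∈ mvSpan s r F)
    (hgen : C = mvSpan s r F ⊔ Ideal.span {e})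
    (M : (∀ k, ZMod (r k)) → L)
    (hM : M = afforded L (definingSetMv r α (C : Set (MvPolynomial (Fin s) F)))) :
    (∀ D : Set (∀ k, ZMod (r k)), qClosed q D → D ≠ Set.univ →
        {i | afforded L D i ≠ 0} ⊆ {i | M i ≠ 0} →
        ∃ e' : MvPolynomial (Fin s) F,
          (e' ∈ C ∧ e' ∉ mvSpan s r F ∧ e' * e' - e' ∈ mvSpan s r F ∧
            dftMatrix (r := r) α e' = afforded L D) ∧
          ∀ e'' : MvPolynomial (Fin s) F,
            (e'' ∈ C ∧ e'' ∉ mvSpan s r F ∧ e'' * e'' - e'' ∈ mvSpan s r F ∧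
              dftMatrix (r := r) α e'' = afforded L D) →
            e'' - e' ∈ mvSpan s r F) ∧
    (∀ e' : MvPolynomial (Fin s) F,
        e' ∈ C → e' ∉ mvSpan s r F → e' * e' - e' ∈ mvSpan s r F →
        ∃ D : Set (∀ k, ZMod (r k)), qClosed q D ∧ D ≠ Set.univ ∧
          {i | afforded L D i ≠ 0} ⊆ {i | M i ≠ 0} ∧
          dftMatrix (r := r) α e' = afforded L D) ∧
    appDistCodeAt r B α C =
      ⨅ P ∈ {P : (∀ k, ZMod (r k)) → L |
          (∃ D, qClosed q D ∧ P = afforded L D) ∧ P ≠ 0 ∧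
          {i | P i ≠ 0} ⊆ {i | M i ≠ 0}},
        hypDist B s r P :=
  appDistCodeAt_eq_min_over_qOrbit_hypermatrices_general q hq s r hss α hα B C e heid hgen M hM
end
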